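/- arXiv:1805.10027 — 2 statements merged into one kernel-verified Lean document; each statement's English description precedes it below -/
import Mathlib

section
/- If X and Y are independent nonnegative random variables with regularly varying tails, namely lim_{t→∞} t^α P(X > t) = c₁ > 0 and lim_{t→∞} t^β P(Y > t) = c₂ > 0 where 0 < α < β < 1, then lim_{t→∞} t^α P(X + Y > t) = c₁; i.e., the sum X + Y is heavy-tailed with the smaller index α and the same tail constant as X. -/
open MeasureTheory ProbabilityTheory Filter Set
open scoped ENNReal Topology

/-!
Since `Y ≥ 0`, the tail of `X + Y` dominates that of `X`, which gives the lower bound. For the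
upper bound fix `s < 1` and split `{t < X + Y} ⊆ {s t < X} ∪ {(1 - s) t < Y}`: after multiplying
by `t ^ α` the first part tends to `s ^ (-α) c₁` by the scaling of the tail of `X`, while the
second tends to `0` because the tail of `Y` decays like `t ^ (-β)` with `β > α`. Letting `s → 1`
gives the limit `c₁`.
-/

namespace Filter.Tendsto

variable {f : ℝ → ℝ} {α β c : ℝ}

theorem rpow_mul_comp_const_mul (h : Tendsto (fun t => t ^ α * f t) atTop (𝓝 c))
    {s : ℝ} (hs : 0 < s) :
    Tendsto (fun t => t ^ α * f (s * t)) atTop (𝓝 (s ^ (-α) * c)) := by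
  refine ((h.comp (tendsto_id.const_mul_atTop hs)).const_mul (s ^ (-α))).congr' ?_
  filter_upwards [eventually_ge_atTop 0] with t ht
  simp only [Function.comp_apply, id, Real.mul_rpow hs.le ht, Real.rpow_neg hs.le]
  field_simp [(Real.rpow_pos_of_pos hs α).ne']

theorem rpow_mul_of_lt (h : Tendsto (fun t => t ^ β * f t) atTop (𝓝 c)) (hαβ : α < β) :
    Tendsto (fun t => t ^ α * f t) atTop (𝓝 0) := by
  have hpow : Tendsto (fun t : ℝ => t ^ (α - β)) atTop (𝓝 0) := by
    simpa only [neg_sub] using tendsto_rpow_neg_atTop (sub_pos.2 hαβ)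
  refine (zero_mul c ▸ hpow.mul h).congr' ?_
  filter_upwards [eventually_gt_atTop 0] with t ht
  rw [← mul_assoc, ← Real.rpow_add ht, sub_add_cancel]

end Filter.Tendsto

theorem exists_rpow_neg_mul_lt {α c a : ℝ} (ha : c < a) :
    ∃ s ∈ Ioo (0 : ℝ) 1, s ^ (-α) * c < a := by
  have hcont : ContinuousAt (fun s : ℝ => s ^ (-α) * c) 1 :=
    (Real.continuousAt_rpow_const 1 (-α) (Or.inl one_ne_zero)).mul continuousAt_const
  have hlt : ∀ᶠ s in 𝓝 (1 : ℝ), s ^ (-α) * c < a :=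
    hcont.eventually_lt continuousAt_const (by simpa using ha)
  obtain ⟨s, hsa, hs⟩ :=
    ((hlt.filter_mono nhdsWithin_le_nhds).and (Ioo_mem_nhdsLT zero_lt_one)).exists
  exact ⟨s, hs, hsa⟩

theorem setOf_add_lt_add_subset {Ω : Type*} (X Y : Ω → ℝ) (s u : ℝ) :
    {ω | s + u < X ω + Y ω} ⊆ {ω | s < X ω} ∪ {ω | u < Y ω} := by
  intro ω (hω : s + u < X ω + Y ω)
  by_contra h
  exact hω.not_ge <|
    add_le_add (not_lt.1 fun hs => h (Or.inl hs)) (not_lt.1 fun hu => h (Or.inr hu))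

section Tail

variable {Ω : Type*} [MeasurableSpace Ω] (μ : Measure Ω) [IsFiniteMeasure μ] (X Y : Ω → ℝ)

theorem measureReal_lt_add_le (s u : ℝ) :
    μ.real {ω | s + u < X ω + Y ω} ≤ μ.real {ω | s < X ω} + μ.real {ω | u < Y ω} :=
  (measureReal_mono (setOf_add_lt_add_subset X Y s u)).trans (measureReal_union_le _ _)

variable {μ X Y}

theorem measureReal_lt_le_lt_add (hY : ∀ᵐ ω ∂μ, 0 ≤ Y ω) (t : ℝ) :
    μ.real {ω | t < X ω} ≤ μ.real {ω | t < X ω + Y ω} := by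
  refine ENNReal.toReal_mono (measure_ne_top _ _) (measure_mono_ae ?_)
  filter_upwards [hY] with ω hω (hX : t < X ω)
  exact hX.trans_le (le_add_of_nonneg_right hω)

end Tail

theorem sum_heavyTailed_min_index_general
    {Ω : Type*} [MeasureSpace Ω] [IsProbabilityMeasure (ℙ : Measure Ω)]
    (X Y : Ω → ℝ)
    (α β c₁ c₂ : ℝ) (hαβ : α < β)
    (hYpos : ∀ᵐ ω ∂ℙ, 0 < Y ω)
    (hXtail : Tendsto (fun t : ℝ => t ^ α * (ℙ {ω | t < X ω}).toReal) atTop (𝓝 c₁))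
    (hYtail : Tendsto (fun t : ℝ => t ^ β * (ℙ {ω | t < Y ω}).toReal) atTop (𝓝 c₂)) :
    Tendsto (fun t : ℝ => t ^ α * (ℙ {ω | t < X ω + Y ω}).toReal) atTop (𝓝 c₁) := by
  simp only [← measureReal_def] at *
  refine tendsto_order.2 ⟨fun a ha => ?_, fun a ha => ?_⟩
  · filter_upwards [hXtail.eventually_const_lt ha, eventually_ge_atTop 0] with t hat ht
    exact hat.trans_le <| mul_le_mul_of_nonneg_left
      (measureReal_lt_le_lt_add (hYpos.mono fun _ => le_of_lt) t) (Real.rpow_nonneg ht α)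
  · obtain ⟨s, ⟨hs₀, hs₁⟩, hsa⟩ := exists_rpow_neg_mul_lt (α := α) ha
    have hX := hXtail.rpow_mul_comp_const_mul hs₀
    have hY := (hYtail.rpow_mul_comp_const_mul (sub_pos.2 hs₁)).rpow_mul_of_lt hαβ
    filter_upwards [(hX.add hY).eventually_lt_const (by rwa [add_zero]),
      eventually_ge_atTop 0] with t ht ht0
    have hsplit := measureReal_lt_add_le ℙ X Y (s * t) ((1 - s) * t)
    rw [← add_mul, add_sub_cancel, one_mul] at hsplit
    rw [← mul_add] at ht
    exact (mul_le_mul_of_nonneg_left hsplit (Real.rpow_nonneg ht0 α)).trans_lt ht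

/-- If `X` and `Y` are independent positive random variables with regularly varying
tails of indices `α < β`, then `X + Y` has a regularly varying tail of index `α`
with the same tail constant `c₁` as `X`. -/
theorem sum_heavyTailed_min_index
    {Ω : Type*} [MeasureSpace Ω] [IsProbabilityMeasure (ℙ : Measure Ω)]
    (X Y : Ω → ℝ) (hXm : Measurable X) (hYm : Measurable Y)
    (hindep : IndepFun X Y ℙ)
    (α β c₁ c₂ : ℝ) (hα : 0 < α) (hβ : β < 1) (hαβ : α < β)
    (hc₁ : 0 < c₁) (hc₂ : 0 < c₂)
    (hXpos : ∀ᵐ ω ∂ℙ, 0 < X ω) (hYpos : ∀ᵐ ω ∂ℙ, 0 < Y ω)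
    (hXtail : Tendsto (fun t : ℝ => t ^ α * (ℙ {ω | t < X ω}).toReal) atTop (𝓝 c₁))
    (hYtail : Tendsto (fun t : ℝ => t ^ β * (ℙ {ω | t < Y ω}).toReal) atTop (𝓝 c₂)) :
    Tendsto (fun t : ℝ => t ^ α * (ℙ {ω | t < X ω + Y ω}).toReal) atTop (𝓝 c₁) :=
  sum_heavyTailed_min_index_general X Y α β c₁ c₂ hαβ hYpos hXtail hYtail
end

section
/- With ν_L as above (the image of ν ⊗ μ under (t,u) ↦ tu), the measure ν_{(L,S)} on (ℝ^d \ {0}) × (0,∞) defined as the image of ν ⊗ μ under (t,u) ↦ (tu, t) is a Lévy measure on ℝ^{d+1}: ∫ min(‖x‖² + s², 1) dν_{(L,S)}(x,s) < ∞; moreover its marginal on the first coordinate is ν_L and its marginal on the second coordinate is ν. -/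
/-!
Since `μ` lives on the unit sphere, the jump `t • u` has norm `|t|` for `ν ⊗ μ`-a.e. `(t, u)`,
so the Lévy integrand `min (‖x‖² + s², 1)` is `νLS`-a.e. a function `min (2 s², 1)` of
the waiting time `s` alone. Integrating it against the second marginal `ν` reduces the claim to
the one-dimensional Lévy condition for the density `t ^ (-α - 1)`, which holds since
`t ^ (1 - α)` is integrable near `0` and `t ^ (-α - 1)` is integrable near `∞`.
-/

open MeasureTheory Set
open scoped ENNReal

theorem integrableOn_rpow_mul_min_sq_one {α : ℝ} (hα : 0 < α) (hα2 : α < 2) :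
    IntegrableOn (fun t : ℝ => t ^ (-α - 1) * min (t ^ 2) 1) (Ioi 0) := by
  rw [← Ioc_union_Ioi_eq_Ioi zero_le_one]
  refine IntegrableOn.union ?_ ?_
  · have hsmall : IntegrableOn (fun t : ℝ => t ^ (1 - α)) (Ioc 0 1) := by
      rw [← intervalIntegrable_iff_integrableOn_Ioc_of_le zero_le_one]
      exact intervalIntegral.intervalIntegrable_rpow' (by linarith)
    refine hsmall.congr_fun (fun t ht => ?_) measurableSet_Ioc
    have hsq : t ^ 2 ≤ 1 := pow_le_one₀ ht.1.le ht.2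
    rw [min_eq_left hsq, ← Real.rpow_natCast, ← Real.rpow_add ht.1]
    norm_num
    ring_nf
  · refine (integrableOn_Ioi_rpow_of_lt (a := -α - 1) (by linarith) one_pos).congr_fun (fun t ht => ?_)
      measurableSet_Ioi
    have hsq : 1 ≤ t ^ 2 := one_le_pow₀ (le_of_lt ht)
    rw [min_eq_right hsq, mul_one]

theorem lintegral_min_sq_one_withDensity_rpow_lt_top {α : ℝ} (hα : 0 < α) (hα2 : α < 2)
    (c : ℝ) :
    ∫⁻ t, ENNReal.ofReal (min (t ^ 2) 1)
      ∂(volume.restrict (Ioi 0)).withDensity (fun t => ENNReal.ofReal (c * t ^ (-α - 1))) < ⊤ := by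
  rw [lintegral_withDensity_eq_lintegral_mul _ (by fun_prop) (by fun_prop)]
  simp only [Pi.mul_apply, ← ENNReal.ofReal_mul' (le_min (sq_nonneg _) zero_le_one), mul_assoc]
  exact IntegrableOn.setLIntegral_lt_top ((integrableOn_rpow_mul_min_sq_one hα hα2).const_mul c)

theorem ofReal_min_add_self_one_le (x : ℝ) :
    ENNReal.ofReal (min (x + x) 1) ≤ 2 * ENNReal.ofReal (min x 1) := by
  rw [← ENNReal.ofReal_ofNat 2, ← ENNReal.ofReal_mul zero_le_two]
  refine ENNReal.ofReal_le_ofReal ?_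
  rcases le_total x 1 with h | h
  · rw [min_eq_left h]; linarith [min_le_left (x + x) 1]
  · rw [min_eq_right h]; linarith [min_le_right (x + x) 1]

section PolarImage

variable {E : Type*} [NormedAddCommGroup E] [NormedSpace ℝ E] [MeasurableSpace E]
  [BorelSpace E] [SecondCountableTopology E] {ν : Measure ℝ} {μ : Measure E}

theorem map_snd_map_smul_prodMk [IsProbabilityMeasure μ] :
    (Measure.map (fun p : ℝ × E => (p.1 • p.2, p.1)) (ν.prod μ)).map Prod.snd = ν := by
  rw [Measure.map_map measurable_snd (by fun_prop)]
  exact (Measure.map_fst_prod).trans (by rw [measure_univ, one_smul])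

theorem ae_map_smul_prodMk_norm_fst_eq_abs_snd (hμ : ∀ᵐ u ∂μ, ‖u‖ = 1) :
    ∀ᵐ q ∂Measure.map (fun p : ℝ × E => (p.1 • p.2, p.1)) (ν.prod μ), ‖q.1‖ = |q.2| := by
  rw [ae_map_iff (by fun_prop) (measurableSet_eq_fun (by fun_prop) (by fun_prop))]
  filter_upwards [Measure.quasiMeasurePreserving_snd.ae hμ] with p hp
  rw [norm_smul, hp, mul_one, Real.norm_eq_abs]

end PolarImage

theorem joint_levy_measure_marginals_general
    (d : ℕ) (α : ℝ) (hα : 0 < α) (hα1 : α < 1)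
    (μ : Measure (EuclideanSpace ℝ (Fin d))) [IsProbabilityMeasure μ]
    (hμ : ∀ᵐ u ∂μ, ‖u‖ = 1)
    (ν : Measure ℝ)
    (hν : ν = (volume.restrict (Ioi (0 : ℝ))).withDensity
      (fun t => ENNReal.ofReal (α * t ^ (-α - 1) / Real.Gamma (1 - α))))
    (νL : Measure (EuclideanSpace ℝ (Fin d)))
    (hνL : νL = Measure.map
      (fun p : ℝ × EuclideanSpace ℝ (Fin d) => p.1 • p.2) (ν.prod μ))
    (νLS : Measure (EuclideanSpace ℝ (Fin d) × ℝ))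
    (hνLS : νLS = Measure.map
      (fun p : ℝ × EuclideanSpace ℝ (Fin d) => (p.1 • p.2, p.1)) (ν.prod μ)) :
    (∫⁻ q, ENNReal.ofReal (min (‖q.1‖ ^ 2 + q.2 ^ 2) 1) ∂νLS) < ⊤ ∧
      Measure.map Prod.fst νLS = νL ∧ Measure.map Prod.snd νLS = ν := by
  have hsnd : νLS.map Prod.snd = ν := hνLS ▸ map_snd_map_smul_prodMk
  have hlevy : ∫⁻ t, ENNReal.ofReal (min (t ^ 2) 1) ∂ν < ⊤ := by
    simp_rw [hν, mul_div_right_comm α]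
    exact lintegral_min_sq_one_withDensity_rpow_lt_top hα (by linarith) _
  refine ⟨?_, by rw [hνLS, hνL, Measure.map_map measurable_fst (by fun_prop)]; rfl, hsnd⟩
  calc ∫⁻ q, ENNReal.ofReal (min (‖q.1‖ ^ 2 + q.2 ^ 2) 1) ∂νLS
      = ∫⁻ q, ENNReal.ofReal (min (q.2 ^ 2 + q.2 ^ 2) 1) ∂νLS := by
        refine lintegral_congr_ae ?_
        filter_upwards [hνLS ▸ ae_map_smul_prodMk_norm_fst_eq_abs_snd hμ] with q hq
        rw [hq, sq_abs]
    _ = ∫⁻ t, ENNReal.ofReal (min (t ^ 2 + t ^ 2) 1) ∂ν := by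
        rw [← hsnd, lintegral_map (by fun_prop) measurable_snd]
    _ ≤ ∫⁻ t, 2 * ENNReal.ofReal (min (t ^ 2) 1) ∂ν :=
        lintegral_mono fun t => ofReal_min_add_self_one_le (t ^ 2)
    _ < ⊤ := by
        rw [lintegral_const_mul _ (by fun_prop)]
        exact ENNReal.mul_lt_top ENNReal.ofNat_lt_top hlevy

/-- The image of `ν ⊗ μ` under `(t,u) ↦ (t • u, t)` is a Lévy measure on `ℝ^{d+1}`
whose first marginal is the spatial Lévy measure `ν_L` (the image of `ν ⊗ μ` under
`(t,u) ↦ t • u`) and whose second marginal is `ν`. -/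
theorem joint_levy_measure_marginals
    (d : ℕ) (hd : 1 ≤ d) (α : ℝ) (hα : 0 < α) (hα1 : α < 1)
    (μ : Measure (EuclideanSpace ℝ (Fin d))) [IsProbabilityMeasure μ]
    (hμ : ∀ᵐ u ∂μ, ‖u‖ = 1)
    (ν : Measure ℝ)
    (hν : ν = (volume.restrict (Ioi (0 : ℝ))).withDensity
      (fun t => ENNReal.ofReal (α * t ^ (-α - 1) / Real.Gamma (1 - α))))
    (νL : Measure (EuclideanSpace ℝ (Fin d)))
    (hνL : νL = Measure.map
      (fun p : ℝ × EuclideanSpace ℝ (Fin d) => p.1 • p.2) (ν.prod μ))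
    (νLS : Measure (EuclideanSpace ℝ (Fin d) × ℝ))
    (hνLS : νLS = Measure.map
      (fun p : ℝ × EuclideanSpace ℝ (Fin d) => (p.1 • p.2, p.1)) (ν.prod μ)) :
    (∫⁻ q, ENNReal.ofReal (min (‖q.1‖ ^ 2 + q.2 ^ 2) 1) ∂νLS) < ⊤ ∧
      Measure.map Prod.fst νLS = νL ∧ Measure.map Prod.snd νLS = ν :=
  joint_levy_measure_marginals_general d α hα hα1 μ hμ ν hν νL hνL νLS hνLS
end
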